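/- In a finite dimaze, a set of vertices is a maximal linkable set if and only if it is linkable onto the exits. -/

import Mathlib

open Set

universe u

variable {V : Type*}

/-- A directed path in the digraph `D`: a nonempty duplicate-free list of vertices
with an edge between consecutive vertices. -/
structure DiPath {V : Type*} (D : V → V → Prop) where
  verts : List V
  ne : verts ≠ []
  nodup : verts.Nodup
  chain : verts.Chain' D

namespace DiPath

variable {D : V → V → Prop}

/-- The initial vertex of a directed path. -/
def first (p : DiPath D) : V := p.verts.head p.ne

/-- The terminal vertex of a directed path. -/
def last (p : DiPath D) : V := p.verts.getLast p.ne

/-- The set of vertices of a directed path. -/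
def vertSet (p : DiPath D) : Set V := {v | v ∈ p.verts}

/-- The set of (directed) edges of a directed path. -/
def edgeSet (p : DiPath D) : Set (V × V) := {e | e ∈ p.verts.zip p.verts.tail}

end DiPath

/-- The set of initial vertices of a collection of paths. -/
def Ini {D : V → V → Prop} (P : Set (DiPath D)) : Set V := {v | ∃ p ∈ P, p.first = v}

/-- The set of terminal vertices of a collection of paths. -/
def Ter {D : V → V → Prop} (P : Set (DiPath D)) : Set V := {v | ∃ p ∈ P, p.last = v}

/-- All vertices used by a collection of paths. -/
def LinkVerts {D : V → V → Prop} (P : Set (DiPath D)) : Set V := ⋃ p ∈ P, p.vertSet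

/-- All edges used by a collection of paths. -/
def LinkEdges {D : V → V → Prop} (P : Set (DiPath D)) : Set (V × V) := ⋃ p ∈ P, p.edgeSet

/-- A linkage in the dimaze `(D, B0)`: a set of pairwise vertex-disjoint directed
paths, each ending in `B0`. -/
def IsLinkage (D : V → V → Prop) (B0 : Set V) (P : Set (DiPath D)) : Prop :=
  (∀ p ∈ P, p.last ∈ B0) ∧
  (∀ p ∈ P, ∀ q ∈ P, p ≠ q → Disjoint p.vertSet q.vertSet)

/-- `(D, B0)` is a dimaze: every vertex of `B0` has out-degree `0`. -/
def IsDimaze (D : V → V → Prop) (B0 : Set V) : Prop := ∀ b ∈ B0, ∀ v, ¬ D b v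

/-- A set of vertices is linkable if it is the set of initial vertices of a linkage. -/
def Linkable (D : V → V → Prop) (B0 : Set V) (I : Set V) : Prop :=
  ∃ P, IsLinkage D B0 P ∧ Ini P = I

/-- A set of vertices is linkable onto `B0` if it is the set of initial vertices of
a linkage whose terminal vertices are all of `B0`. -/
def LinkableOnto (D : V → V → Prop) (B0 : Set V) (I : Set V) : Prop :=
  ∃ P, IsLinkage D B0 P ∧ Ini P = I ∧ Ter P = B0

/-- `I` is a maximal element (w.r.t. inclusion) of the set system `Ind`. -/
def MaximalIn {α : Type*} (Ind : Set α → Prop) (I : Set α) : Prop :=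
  Ind I ∧ ∀ J, Ind J → I ⊆ J → J = I

/-- The maximality axiom (IM). -/
def SatisfiesIM {α : Type*} (Ind : Set α → Prop) : Prop :=
  ∀ I X : Set α, Ind I → I ⊆ X →
    ∃ J, Ind J ∧ I ⊆ J ∧ J ⊆ X ∧ ∀ K, Ind K → K ⊆ X → J ⊆ K → K = J

/-- `Ind` is the collection of independent sets of a matroid:
axioms (I1), (I2), (I3) and (IM). -/
def IsMatroidIndep {α : Type*} (Ind : Set α → Prop) : Prop :=
  Ind ∅ ∧
  (∀ I J : Set α, I ⊆ J → Ind J → Ind I) ∧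
  (∀ I B : Set α, Ind I → ¬ MaximalIn Ind I → MaximalIn Ind B →
    ∃ x ∈ B \ I, Ind (insert x I)) ∧
  SatisfiesIM Ind

/-- The dimaze `(D, B0)` contains an alternating comb: there is an alternating ray
(given by the injective vertex sequence `f` and edge orientations `o`, with
infinitely many vertices of in-degree 2) together with a linkage of all its
in-degree-2 vertices and its first vertex onto a set of exits contained in `B0`,
by disjoint paths meeting the ray exactly at their initial vertices. -/
def ContainsAltComb (D : V → V → Prop) (B0 : Set V) : Prop :=
  ∃ (f : ℕ → V) (o : ℕ → Bool) (P : Set (DiPath D)),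
    Function.Injective f ∧
    (∀ n, if o n then D (f n) (f (n+1)) else D (f (n+1)) (f n)) ∧
    (∀ N, ∃ k ≥ N, o k = true ∧ o (k+1) = false) ∧
    IsLinkage D B0 P ∧
    Ini P = insert (f 0) {v | ∃ k, o k = true ∧ o (k+1) = false ∧ v = f (k+1)} ∧
    (∀ p ∈ P, ∀ v ∈ p.vertSet, v ∈ Set.range f → v = p.first)


/-!
The paths of a linkage are disjoint, so each one is determined by its initial vertex and also
by its terminal vertex; hence a linkage has as many initial as terminal vertices. If `I` is
linked onto `B₀`, every linkable `J ⊇ I` thus has `|J| ≤ |B₀| = |I|`, so `I` is maximal.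
Conversely, let `I` be maximal, linked by `P`. An exit `b` has out-degree `0`, so if it lies on
a path of `P` it is that path's terminal vertex; if it lies on none, the trivial path `b` can be
added to `P`, and maximality puts `b` into `I`, i.e. on a path of `P` after all.
-/

open Function

theorem List.IsChain.eq_getLast_of_mem {α : Type*} {R : α → α → Prop} {a : α} :
    ∀ {l : List α}, l.IsChain R → ∀ (hne : l ≠ []), a ∈ l → (∀ b, ¬ R a b) → a = l.getLast hne
  | [_], _, _, ha, _ => by simpa using ha
  | x :: y :: t, hc, _, ha, hmax => by
    rcases List.mem_cons.mp ha with rfl | ha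
    · exact absurd (List.isChain_cons_cons.mp hc).1 (hmax y)
    · rw [List.getLast_cons (List.cons_ne_nil y t)]
      exact (List.isChain_cons_cons.mp hc).2.eq_getLast_of_mem (List.cons_ne_nil y t) ha hmax

namespace DiPath

variable {D : V → V → Prop}

def single (v : V) : DiPath D :=
  ⟨[v], List.cons_ne_nil v [], List.nodup_singleton v, List.isChain_singleton v⟩

@[simp] theorem vertSet_single (v : V) : (single v : DiPath D).vertSet = {v} := by
  ext; simp [vertSet, single]

theorem first_mem_vertSet (p : DiPath D) : p.first ∈ p.vertSet := List.head_mem p.ne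

theorem last_mem_vertSet (p : DiPath D) : p.last ∈ p.vertSet := List.getLast_mem p.ne

theorem eq_last_of_mem_of_forall_not_adj (p : DiPath D) {v : V} (hv : v ∈ p.vertSet)
    (hout : ∀ w, ¬ D v w) : v = p.last :=
  p.chain.eq_getLast_of_mem p.ne hv hout

end DiPath

section Linkage

variable {D : V → V → Prop} {B0 : Set V} {P : Set (DiPath D)}

theorem Ini_eq_image (P : Set (DiPath D)) : Ini P = DiPath.first '' P := rfl

theorem Ter_eq_image (P : Set (DiPath D)) : Ter P = DiPath.last '' P := rfl

theorem Ini_insert (p : DiPath D) (P : Set (DiPath D)) :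
    Ini (insert p P) = insert p.first (Ini P) :=
  image_insert_eq

theorem first_mem_LinkVerts {p : DiPath D} (hp : p ∈ P) : p.first ∈ LinkVerts P :=
  mem_biUnion hp p.first_mem_vertSet

theorem injOn_of_pairwise_disjoint_vertSet {f : DiPath D → V} (hf : ∀ p, f p ∈ p.vertSet)
    (hP : P.Pairwise (Disjoint on DiPath.vertSet)) : P.InjOn f :=
  fun p hp q hq hpq => by_contra fun hne => (hP hp hq hne).ne_of_mem (hf p) (hpq ▸ hf q) rfl

theorem ncard_Ini_eq_ncard_Ter (hP : P.Pairwise (Disjoint on DiPath.vertSet)) :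
    (Ini P).ncard = (Ter P).ncard := by
  rw [Ini_eq_image, Ter_eq_image,
    (injOn_of_pairwise_disjoint_vertSet DiPath.first_mem_vertSet hP).ncard_image,
    (injOn_of_pairwise_disjoint_vertSet DiPath.last_mem_vertSet hP).ncard_image]

namespace IsLinkage

theorem pairwise_disjoint (hP : IsLinkage D B0 P) : P.Pairwise (Disjoint on DiPath.vertSet) :=
  hP.2

theorem Ter_subset (hP : IsLinkage D B0 P) : Ter P ⊆ B0 := by
  rintro _ ⟨p, hp, rfl⟩
  exact hP.1 p hp

theorem ncard_Ini_le [Finite V] (hP : IsLinkage D B0 P) : (Ini P).ncard ≤ B0.ncard :=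
  (ncard_Ini_eq_ncard_Ter hP.pairwise_disjoint).trans_le (ncard_le_ncard hP.Ter_subset)

theorem insert_single {b : V} (hP : IsLinkage D B0 P) (hb : b ∈ B0) (hbP : b ∉ LinkVerts P) :
    IsLinkage D B0 (insert (DiPath.single b) P) := by
  have hfree : ∀ q ∈ P, Disjoint (DiPath.single b : DiPath D).vertSet q.vertSet := by
    intro q hq
    rw [DiPath.vertSet_single, disjoint_singleton_left]
    exact fun hbq => hbP (mem_biUnion hq hbq)
  refine ⟨?_, pairwise_insert.mpr
    ⟨hP.pairwise_disjoint, fun q hq _ => ⟨hfree q hq, (hfree q hq).symm⟩⟩⟩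
  rintro p (rfl | hp)
  · exact hb
  · exact hP.1 p hp

theorem Ter_eq_of_maximalIn (hD : IsDimaze D B0) (hP : IsLinkage D B0 P)
    (hmax : MaximalIn (Linkable D B0) (Ini P)) : Ter P = B0 := by
  refine hP.Ter_subset.antisymm fun b hb => ?_
  by_cases hbP : b ∈ LinkVerts P
  · obtain ⟨p, hp, hbp⟩ := mem_iUnion₂.mp hbP
    exact ⟨p, hp, (p.eq_last_of_mem_of_forall_not_adj hbp (hD b hb)).symm⟩
  · have hins : insert b (Ini P) = Ini P :=
      hmax.2 _ ⟨_, hP.insert_single hb hbP, Ini_insert _ _⟩ (subset_insert _ _)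
    obtain ⟨p, hp, rfl⟩ : b ∈ Ini P := hins ▸ mem_insert b _
    exact absurd (first_mem_LinkVerts hp) hbP

end IsLinkage

theorem LinkableOnto.maximalIn [Finite V] {I : Set V} (h : LinkableOnto D B0 I) :
    MaximalIn (Linkable D B0) I := by
  obtain ⟨P, hP, rfl, hTer⟩ := h
  refine ⟨⟨P, hP, rfl⟩, ?_⟩
  rintro _ ⟨Q, hQ, rfl⟩ hPQ
  refine (eq_of_subset_of_ncard_le hPQ ?_).symm
  calc (Ini Q).ncard ≤ B0.ncard := hQ.ncard_Ini_le
    _ = (Ini P).ncard := by rw [← hTer, ncard_Ini_eq_ncard_Ter hP.pairwise_disjoint]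

theorem MaximalIn.linkableOnto (hD : IsDimaze D B0) {I : Set V}
    (h : MaximalIn (Linkable D B0) I) : LinkableOnto D B0 I := by
  obtain ⟨P, hP, rfl⟩ := h.1
  exact ⟨P, hP, rfl, hP.Ter_eq_of_maximalIn hD h⟩

end Linkage

/-- In a finite dimaze, a set is maximally linkable iff it is linkable onto the exits. -/
theorem finite_dimaze_maximal_iff_onto [Finite V] (D : V → V → Prop) (B0 : Set V)
    (hD : IsDimaze D B0) (I : Set V) :
    MaximalIn (Linkable D B0) I ↔ LinkableOnto D B0 I :=
  ⟨MaximalIn.linkableOnto hD, LinkableOnto.maximalIn⟩
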